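/- arXiv:1708.07617 — 2 statements merged into one kernel-verified Lean document; each statement's English description precedes it below -/
import Mathlib

section
/- Let A be a ℂ-algebra with elements a, b, c, d satisfying the SL₂^q relations (ba = qab, ca = qac, db = qbd, dc = qcd, bc = cb, ad − q⁻¹bc = da − qbc = 1). Then Trace ρ₃(a,b;c,d) = (a + d)³ − 2(a + d), where ρ₃ is the induced action on degree-3 homogeneous polynomials in the quantum plane. -/
/-- The quantum `A`-plane `A[X,Y]^q` in degreewise coordinates: an element is a finitely
supported family of coefficients in `A`, indexed by the monomials `X^i Y^j`. -/
abbrev QPlane (A : Type*) [Ring A] := (ℕ × ℕ) →₀ A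

/-- Multiplication in the quantum plane: the variables `X`, `Y` commute with all
coefficients in `A` and satisfy `Y X = q X Y`, so that
`(α X^i Y^j)(β X^k Y^l) = q^{jk} (α β) X^{i+k} Y^{j+l}`. -/
noncomputable def qmul {A : Type*} [Ring A] [Algebra ℂ A] (q : ℂ)
    (f g : QPlane A) : QPlane A :=
  f.sum fun p α => g.sum fun r β =>
    Finsupp.single (p.1 + r.1, p.2 + r.2) (q ^ (p.2 * r.1) • (α * β))

/-- Powers in the quantum plane. -/
noncomputable def qpow {A : Type*} [Ring A] [Algebra ℂ A] (q : ℂ)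
    (f : QPlane A) : ℕ → QPlane A
  | 0 => Finsupp.single (0, 0) 1
  | m + 1 => qmul q f (qpow q f m)

/-- The image of the basis monomial `X^{n−u} Y^u` under the action `ρ_n` of the matrix
`(a, b; c, d)`, which sends `X ↦ aX + bY`, `Y ↦ cX + dY` and is extended
multiplicatively: it is `(aX + bY)^{n−u} (cX + dY)^u`. -/
noncomputable def rhoImage {A : Type*} [Ring A] [Algebra ℂ A] (q : ℂ)
    (a b c d : A) (n u : ℕ) : QPlane A :=
  qmul q
    (qpow q (Finsupp.single (1, 0) a + Finsupp.single (0, 1) b) (n - u))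
    (qpow q (Finsupp.single (1, 0) c + Finsupp.single (0, 1) d) u)

/-- The trace of `ρ_n(a, b; c, d)`: the sum over `u` of the coefficient of
`X^{n−u} Y^u` in the image of `X^{n−u} Y^u`. -/
noncomputable def traceRho {A : Type*} [Ring A] [Algebra ℂ A] (q : ℂ)
    (a b c d : A) (n : ℕ) : A :=
  ∑ u ∈ Finset.range (n + 1), rhoImage q a b c d n u (n - u, u)

/-! The trace of `ρ₃` is read off from the multiplication rule of the quantum plane as the
noncommutative cubic `a³ + a²d + q abc + q² bac + ad² + q bcd + q² bdc + d³`.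
In `(a + d)³` the four words `ada, daa, dad, dda` are reduced with `da = 1 + q bc`: each becomes
`a` or `d` plus a multiple of `abc` or `bcd`, which accounts for `2(a + d)`, and `ba = q ab`,
`dc = q cd` bring the remaining words of both sides to the same normal form. -/

section QPlane

variable {A : Type*} [Ring A] [Algebra ℂ A] (q : ℂ)

lemma qmul_single_single (p r : ℕ × ℕ) (α β : A) :
    qmul q (Finsupp.single p α) (Finsupp.single r β)
      = Finsupp.single (p.1 + r.1, p.2 + r.2) (q ^ (p.2 * r.1) • (α * β)) := by
  unfold qmul
  rw [Finsupp.sum_single_index, Finsupp.sum_single_index] <;> simp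

lemma qmul_add_left (f g h : QPlane A) : qmul q (f + g) h = qmul q f h + qmul q g h := by
  unfold qmul
  apply Finsupp.sum_add_index' <;> intros <;>
    simp [Finsupp.sum, add_mul, smul_add, Finsupp.single_add, Finset.sum_add_distrib]

lemma qmul_add_right (f g h : QPlane A) : qmul q f (g + h) = qmul q f g + qmul q f h := by
  unfold qmul
  rw [← Finsupp.sum_add]
  refine Finsupp.sum_congr fun p _ => ?_
  apply Finsupp.sum_add_index' <;> intros <;> simp [mul_add, smul_add, Finsupp.single_add]

lemma traceRho_three_eq (a b c d : A) :
    traceRho q a b c d 3 = a * a * a + a * a * d + q • (a * b * c) + q ^ 2 • (b * a * c)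
      + a * d * d + q • (b * c * d) + q ^ 2 • (b * d * c) + d * d * d := by
  simp only [traceRho, rhoImage, Finset.sum_range_succ, Finset.sum_range_zero, Nat.reduceSub,
    qpow, qmul_add_left, qmul_add_right, qmul_single_single, Finsupp.add_apply,
    Finsupp.single_apply]
  norm_num
  simp only [mul_assoc, sq, smul_smul]
  abel

end QPlane

lemma add_cube_sub_two_mul_of_qcomm {A : Type*} [Ring A] [Algebra ℂ A] {q : ℂ} {a b c d : A}
    (hba : b * a = q • (a * b)) (hca : c * a = q • (a * c))
    (hdb : d * b = q • (b * d)) (hdc : d * c = q • (c * d))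
    (hda : d * a = 1 + q • (b * c)) :
    (a + d) ^ 3 - 2 * (a + d) = a * a * a + a * a * d + (q + q ^ 3) • (a * b * c)
      + a * d * d + (q + q ^ 3) • (b * c * d) + d * d * d := by
  have hbca : b * c * a = q ^ 2 • (a * b * c) := by
    rw [mul_assoc, hca, mul_smul_comm, ← mul_assoc, hba, smul_mul_assoc, smul_smul, sq]
  have hdbc : d * (b * c) = q ^ 2 • (b * c * d) := by
    rw [← mul_assoc, hdb, smul_mul_assoc, mul_assoc, hdc, mul_smul_comm, smul_smul, sq,
      ← mul_assoc]
  calc (a + d) ^ 3 - 2 * (a + d)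
      = a * a * a + a * a * d + a * (d * a) + a * d * d + d * a * a + d * a * d + d * (d * a)
          + d * d * d - 2 * (a + d) := by noncomm_ring
    _ = _ := by
      simp only [hda, mul_add, add_mul, mul_one, one_mul, mul_smul_comm, smul_mul_assoc,
        hbca, hdbc, smul_smul, two_mul]
      simp only [mul_assoc]
      module

theorem traceRho_three_general {A : Type*} [Ring A] [Algebra ℂ A] (q : ℂ) (a b c d : A)
    (hba : b * a = q • (a * b)) (hca : c * a = q • (a * c))
    (hdb : d * b = q • (b * d)) (hdc : d * c = q • (c * d))
    (hdet : a * d - q⁻¹ • (b * c) = 1)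
    (hdet' : a * d - q⁻¹ • (b * c) = d * a - q • (b * c)) :
    traceRho q a b c d 3 = (a + d) ^ 3 - 2 * (a + d) := by
  have hda : d * a = 1 + q • (b * c) := eq_add_of_sub_eq (hdet'.symm.trans hdet)
  have hbac : b * a * c = q • (a * b * c) := by rw [hba, smul_mul_assoc]
  have hbdc : b * d * c = q • (b * c * d) := by rw [mul_assoc, hdc, mul_smul_comm, mul_assoc]
  rw [traceRho_three_eq, add_cube_sub_two_mul_of_qcomm hba hca hdb hdc hda, hbac, hbdc]
  module

/-- For `(a, b; c, d) ∈ SL₂^q(A)`, the trace of `ρ₃` equals `(a + d)³ − 2(a + d)`. -/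
theorem traceRho_three {A : Type*} [Ring A] [Algebra ℂ A] (q : ℂ) (a b c d : A)
    (hba : b * a = q • (a * b)) (hca : c * a = q • (a * c))
    (hdb : d * b = q • (b * d)) (hdc : d * c = q • (c * d))
    (hbc : b * c = c * b)
    (hdet : a * d - q⁻¹ • (b * c) = 1)
    (hdet' : a * d - q⁻¹ • (b * c) = d * a - q • (b * c)) :
    traceRho q a b c d 3 = (a + d) ^ 3 - 2 * (a + d) :=
  traceRho_three_general q a b c d hba hca hdb hdc hdet hdet'
end

section
/- Let A₁, …, A_k be 2×2 matrices over a ℂ-algebra A, each triangular of the form (aᵢ, bᵢ; 0, aᵢ⁻¹) or (aᵢ, 0; bᵢ, aᵢ⁻¹) with bᵢaᵢ = q aᵢbᵢ (q ∈ ℂ arbitrary nonzero) and with aᵢ, bᵢ commuting with aⱼ, bⱼ for i ≠ j. Then for every n ≥ 0, T_n(Trace A₁A₂⋯A_k) can be written as a finite sum of monomials of the form q^ξ ∏_{i=1}^{k} aᵢ^{αᵢ} bᵢ^{βᵢ} with ξ, αᵢ ∈ ℤ, βᵢ ∈ ℕ, each appearing with coefficient +1 (i.e., with no negative signs). -/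
/-- The normalized Chebyshev polynomial of the first kind, evaluated in a ring:
`T_{n+1}(t) = t·T_n(t) − T_{n−1}(t)`, `T_1(t) = t`, `T_0(t) = 2`. -/
def chebT {A : Type*} [Ring A] : ℕ → A → A
  | 0, _ => 2
  | 1, t => t
  | n + 2, t => t * chebT (n + 1) t - chebT n t

/-- The triangular matrix `(a, b; 0, a⁻¹)` (if `upper`) or `(a, 0; b, a⁻¹)` (if not). -/
def triMat {A : Type*} [Ring A] (upper : Bool) (a : Aˣ) (b : A) :
    Matrix (Fin 2) (Fin 2) A :=
  if upper then !![(a : A), b; 0, ((a⁻¹ : Aˣ) : A)]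
  else !![(a : A), 0; b, ((a⁻¹ : Aˣ) : A)]

/-- The monomial `∏ᵢ aᵢ^{αᵢ} ∏ᵢ bᵢ^{βᵢ}` associated to exponents
`m = (α, β) : (Fin k → ℤ) × (Fin k → ℕ)`. -/
def qMonomial {A : Type*} [Ring A] {k : ℕ} (a : Fin k → Aˣ) (b : Fin k → A)
    (m : (Fin k → ℤ) × (Fin k → ℕ)) : A :=
  (List.ofFn fun i => ((a i ^ m.1 i : Aˣ) : A)).prod *
    (List.ofFn fun i => b i ^ m.2 i).prod

/-!
Let `P` be the subsemiring of `A` generated by the terms `q^ξ ∏ᵢ aᵢ^{αᵢ} ∏ᵢ bᵢ^{βᵢ}`. Moving the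
`b`'s past the `a`'s only produces powers of `q`, so these terms are closed under multiplication
and every element of `P` is a plain sum of them.

Write `x, y; z, w` for the entries of `A₁⋯A_k`; they lie in `P`. Each factor satisfies the
relations of the quantum group `SL_q(2)`, and left multiplication by a factor whose entries commute
with those of the matrix preserves them; in particular `xw - 1 = q⁻¹yz` and `wx - 1 = q yz` lie in
`P`. With `Uₙ` the Chebyshev polynomials of the second kind evaluated at `x + w`,
`T_{n+1} = (U_{n+1} - xUₙ) + (U_{n+1} - wUₙ)`, and
`U_{n+2} - xU_{n+1} = w(U_{n+1} - xUₙ) + (wx - 1)Uₙ` (symmetrically with `x ↔ w`), so all these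
stay in `P` by induction.
-/

open Polynomial Polynomial.Chebyshev

theorem List.prod_ofFn_mul_prod_ofFn {M : Type*} [Monoid M] :
    ∀ {n : ℕ} (u v : Fin n → M), (∀ i j, j < i → Commute (u i) (v j)) →
      (List.ofFn u).prod * (List.ofFn v).prod = (List.ofFn fun i => u i * v i).prod
  | 0, _, _, _ => by simp
  | n + 1, u, v, h => by
    have hv : Commute (v 0) (List.ofFn fun i : Fin n => u i.succ).prod :=
      Commute.list_prod_right _ _ fun x hx => by
        obtain ⟨i, rfl⟩ := List.mem_ofFn.1 hx
        exact (h i.succ 0 i.succ_pos).symm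
    simp only [List.ofFn_succ, List.prod_cons]
    rw [← List.prod_ofFn_mul_prod_ofFn _ _ fun i j hij =>
        h i.succ j.succ (Fin.succ_lt_succ_iff.2 hij),
      mul_assoc, ← mul_assoc _ (v 0), ← hv.eq, mul_assoc, mul_assoc]

theorem List.prod_ofFn_zpow_smul {K A : Type*} [GroupWithZero K] [Monoid A] [MulAction K A]
    [IsScalarTower K A A] [SMulCommClass K A A] {q : K} (hq : q ≠ 0) :
    ∀ {n : ℕ} (e : Fin n → ℤ) (x : Fin n → A),
      (List.ofFn fun i => q ^ e i • x i).prod = q ^ (∑ i, e i) • (List.ofFn x).prod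
  | 0, _, _ => by simp
  | n + 1, e, x => by
    simp only [List.ofFn_succ, List.prod_cons, Fin.sum_univ_succ, List.prod_ofFn_zpow_smul hq,
      smul_mul_smul_comm, zpow_add₀ hq]

theorem List.prod_ofFn_eq_single {M : Type*} [Monoid M] :
    ∀ {n : ℕ} (f : Fin n → M) (i : Fin n), (∀ j, j ≠ i → f j = 1) → (List.ofFn f).prod = f i
  | 0, _, i, _ => i.elim0
  | n + 1, f, i, h => by
    rw [List.ofFn_succ, List.prod_cons]
    rcases Fin.eq_zero_or_eq_succ i with rfl | ⟨i, rfl⟩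
    · rw [List.prod_eq_one fun x hx => ?_, mul_one]
      obtain ⟨j, rfl⟩ := List.mem_ofFn.1 hx
      exact h j.succ j.succ_ne_zero
    · rw [h 0 (Fin.succ_ne_zero i).symm, one_mul,
        List.prod_ofFn_eq_single _ i fun j hj => h j.succ (Fin.succ_injective _ |>.ne hj)]

section Chebyshev
variable {A : Type*} [Ring A]

theorem chebT_eq_aeval_C (t : A) : ∀ n : ℕ, chebT n t = aeval t (C ℤ n)
  | 0 => by simp [chebT, map_ofNat]
  | 1 => by simp [chebT]
  | n + 2 => by
    rw [chebT, chebT_eq_aeval_C t (n + 1), chebT_eq_aeval_C t n]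
    push_cast
    simp [C_add_two]

theorem chebT_add_mem (P : Subsemiring A) {x w : A} (hx : x ∈ P) (hw : w ∈ P)
    (hxw : x * w - 1 ∈ P) (hwx : w * x - 1 ∈ P) (n : ℕ) : chebT n (x + w) ∈ P := by
  set U : ℕ → A := fun n => aeval (x + w) (S ℤ n)
  have U_zero : U 0 = 1 := by simp [U]
  have U_one : U 1 = x + w := by simp [U]
  have U_add_two (n : ℕ) : U (n + 2) = (x + w) * U (n + 1) - U n := by
    simp only [U]; push_cast; simp [S_add_two]
  have chebT_succ (n : ℕ) : chebT (n + 1) (x + w) = 2 * U (n + 1) - (x + w) * U n := by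
    rw [chebT_eq_aeval_C, C_eq_S_sub_X_mul_S]
    simp [U, map_ofNat]
  clear_value U
  have hmem (n : ℕ) : U n ∈ P ∧ U (n + 1) - x * U n ∈ P ∧ U (n + 1) - w * U n ∈ P := by
    induction n with
    | zero =>
      rw [U_zero, U_one, mul_one, mul_one, add_sub_cancel_left, add_sub_cancel_right]
      exact ⟨P.one_mem, hw, hx⟩
    | succ n ih =>
      obtain ⟨hU, hUx, hUw⟩ := ih
      have hU' : U (n + 1) = x * U n + (U (n + 1) - x * U n) := by abel
      refine ⟨hU' ▸ P.add_mem (P.mul_mem hx hU) hUx, ?_, ?_⟩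
      · have : U (n + 2) - x * U (n + 1) = (w * x - 1) * U n + w * (U (n + 1) - x * U n) := by
          rw [U_add_two]; noncomm_ring
        exact this ▸ P.add_mem (P.mul_mem hwx hU) (P.mul_mem hw hUx)
      · have : U (n + 2) - w * U (n + 1) = (x * w - 1) * U n + x * (U (n + 1) - w * U n) := by
          rw [U_add_two]; noncomm_ring
        exact this ▸ P.add_mem (P.mul_mem hxw hU) (P.mul_mem hx hUw)
  cases n with
  | zero => simp [chebT]
  | succ n =>
    have : chebT (n + 1) (x + w) = (U (n + 1) - x * U n) + (U (n + 1) - w * U n) := by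
      rw [chebT_succ]; noncomm_ring
    exact this ▸ P.add_mem (hmem n).2.1 (hmem n).2.2

end Chebyshev

section QCommute
variable {K A : Type*} [Field K] [Ring A] [Algebra K A] {q : K} {a : Aˣ} {b : A}

theorem mul_left_comm_of_mul_eq_smul {u v : A} (h : u * v = q • (v * u)) (t : A) :
    u * (v * t) = q • (v * (u * t)) := by
  rw [← mul_assoc, h, smul_mul_assoc, mul_assoc]

theorem mul_units_inv_eq_inv_smul (hq : q ≠ 0) (hba : b * a = q • (a * b)) :
    b * ↑a⁻¹ = q⁻¹ • (↑a⁻¹ * b) := by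
  have h := congrArg (fun t => (↑a⁻¹ : A) * t * ↑a⁻¹) hba
  simp only [mul_assoc, Units.mul_inv, Units.inv_mul_cancel_left, mul_one, mul_smul_comm,
    smul_mul_assoc] at h
  rw [h, smul_smul, inv_mul_cancel₀ hq, one_smul]

theorem mul_units_zpow_eq_smul (hq : q ≠ 0) (hba : b * a = q • (a * b)) (α : ℤ) :
    b * ↑(a ^ α) = q ^ α • (↑(a ^ α) * b) := by
  induction α using Int.induction_on with
  | zero => simp
  | succ α ih =>
    rw [zpow_add_one, Units.val_mul, ← mul_assoc, ih, smul_mul_assoc, mul_assoc, hba,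
      mul_smul_comm, smul_smul, ← zpow_add_one₀ hq, mul_assoc]
  | pred α ih =>
    rw [zpow_sub_one, Units.val_mul, ← mul_assoc, ih, smul_mul_assoc, mul_assoc,
      mul_units_inv_eq_inv_smul hq hba, mul_smul_comm, smul_smul, ← zpow_sub_one₀ hq, mul_assoc]

theorem pow_mul_units_zpow_eq_smul (hq : q ≠ 0) (hba : b * a = q • (a * b)) (β : ℕ) (α : ℤ) :
    b ^ β * ↑(a ^ α) = q ^ (β * α) • (↑(a ^ α) * b ^ β) := by
  induction β with
  | zero => simp
  | succ β ih =>
    rw [pow_succ, mul_assoc, mul_units_zpow_eq_smul hq hba, mul_smul_comm, ← mul_assoc, ih,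
      smul_mul_assoc, smul_smul, mul_assoc, ← pow_succ, ← zpow_add₀ hq, Nat.cast_succ,
      add_one_mul, add_comm]

end QCommute

section Triangular
variable {A : Type*} [Ring A]

theorem triMat_true_mul (a : Aˣ) (b : A) (M : Matrix (Fin 2) (Fin 2) A) :
    triMat true a b * M =
      !![a * M 0 0 + b * M 1 0, a * M 0 1 + b * M 1 1; ↑a⁻¹ * M 1 0, ↑a⁻¹ * M 1 1] := by
  ext i j; fin_cases i <;> fin_cases j <;> simp [triMat, Matrix.mul_apply]

/-- Conjugating by the antidiagonal permutation matrix turns `triMat true a⁻¹ b` into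
`triMat false a b`. -/
theorem triMat_false_mul (a : Aˣ) (b : A) (M : Matrix (Fin 2) (Fin 2) A) :
    triMat false a b * M =
      (triMat true a⁻¹ b * M.submatrix Fin.rev Fin.rev).submatrix Fin.rev Fin.rev := by
  rw [triMat_true_mul]
  ext i j; fin_cases i <;> fin_cases j <;> simp [triMat, Matrix.mul_apply, add_comm]

theorem prod_triMat_apply_mem {ι : Type*} (upper : ι → Bool) (a : ι → Aˣ) (b : ι → A)
    (T : Subsemiring A) {l : List ι}
    (hl : ∀ i ∈ l, (a i : A) ∈ T ∧ (↑(a i)⁻¹ : A) ∈ T ∧ b i ∈ T) (r s : Fin 2) :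
    (l.map fun i => triMat (upper i) (a i) (b i)).prod r s ∈ T := by
  revert r s
  refine List.prod_induction (fun M : Matrix (Fin 2) (Fin 2) A => ∀ r s, M r s ∈ T)
    (fun M N hM hN r s => ?_) (fun r s => ?_) ?_
  · rw [Matrix.mul_apply]
    exact T.sum_mem fun j _ => T.mul_mem (hM r j) (hN j s)
  · rw [Matrix.one_apply]
    split_ifs
    exacts [T.one_mem, T.zero_mem]
  · simp only [List.mem_map]
    rintro _ ⟨i, hi, rfl⟩ r s
    obtain ⟨ha, ha', hb⟩ := hl i hi
    cases upper i <;> fin_cases r <;> fin_cases s <;> simp [triMat, ha, ha', hb]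

end Triangular

section QuantumSL2
variable {K A : Type*} [Field K] [Ring A] [Algebra K A]

/-- The defining relations of the quantum group `SL_q(2)` on the entries of `M = (x, y; z, w)`. -/
structure IsQuantumSL2 (q : K) (M : Matrix (Fin 2) (Fin 2) A) : Prop where
  xy : M 0 0 * M 0 1 = q⁻¹ • (M 0 1 * M 0 0)
  xz : M 0 0 * M 1 0 = q⁻¹ • (M 1 0 * M 0 0)
  yw : M 0 1 * M 1 1 = q⁻¹ • (M 1 1 * M 0 1)
  zw : M 1 0 * M 1 1 = q⁻¹ • (M 1 1 * M 1 0)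
  yz : Commute (M 0 1) (M 1 0)
  xw : M 0 0 * M 1 1 = 1 + q⁻¹ • (M 0 1 * M 1 0)
  wx : M 1 1 * M 0 0 = 1 + q • (M 0 1 * M 1 0)

theorem isQuantumSL2_one (q : K) : IsQuantumSL2 q (1 : Matrix (Fin 2) (Fin 2) A) := by
  constructor <;> simp

variable {q : K}

theorem IsQuantumSL2.submatrix_rev (hq : q ≠ 0) {M : Matrix (Fin 2) (Fin 2) A}
    (h : IsQuantumSL2 q M) : IsQuantumSL2 q⁻¹ (M.submatrix Fin.rev Fin.rev) := by
  obtain ⟨hxy, hxz, hyw, hzw, hyz, hxw, hwx⟩ := h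
  constructor <;> simp [hxy, hxz, hyw, hzw, hyz.eq, hyz.symm, hxw, hwx, smul_smul, hq]

theorem IsQuantumSL2.triMat_true_mul (hq : q ≠ 0) {a : Aˣ} {b : A} {M : Matrix (Fin 2) (Fin 2) A}
    (h : IsQuantumSL2 q M) (hba : b * a = q • (a * b))
    (hM : ∀ r s, Commute (a : A) (M r s) ∧ Commute b (M r s)) :
    IsQuantumSL2 q (triMat true a b * M) := by
  have hbai := mul_units_inv_eq_inv_smul hq hba
  have ha r s := (hM r s).1.symm.left_comm
  have hai r s := (hM r s).1.units_inv_left.symm.left_comm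
  have hb r s := (hM r s).2.symm.left_comm
  obtain ⟨hxy, hxz, hyw, hzw, hyz, hxw, hwx⟩ := h
  rw [_root_.triMat_true_mul]
  -- normal form: `a`, `a⁻¹`, then `b`, then the entries in the order `w, y, z, x`;
  -- the products `xw` and `wx` are eliminated
  constructor <;>
    simp only [Matrix.of_apply, Matrix.cons_val_zero, Matrix.cons_val_one, commute_iff_eq,
      mul_add, add_mul, mul_assoc, mul_smul_comm, Units.mul_inv_cancel_left,
      Units.inv_mul_cancel_left, mul_left_comm_of_mul_eq_smul hba,
      mul_left_comm_of_mul_eq_smul hbai,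
      ha, hai, hb, hxy, hxz, hyw, hzw, hyz.eq.symm, hxw, hwx] <;>
    match_scalars <;> field_simp

theorem IsQuantumSL2.triMat_mul (hq : q ≠ 0) {a : Aˣ} {b : A} {M : Matrix (Fin 2) (Fin 2) A}
    (h : IsQuantumSL2 q M) (hba : b * a = q • (a * b))
    (hM : ∀ r s, Commute (a : A) (M r s) ∧ Commute b (M r s)) :
    ∀ u, IsQuantumSL2 q (triMat u a b * M)
  | true => h.triMat_true_mul hq hba hM
  | false => by
    have := ((h.submatrix_rev hq).triMat_true_mul (inv_ne_zero hq)
      (mul_units_inv_eq_inv_smul hq hba)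
      fun r s => ⟨(hM _ _).1.units_inv_left, (hM _ _).2⟩).submatrix_rev (inv_ne_zero hq)
    rwa [inv_inv, ← triMat_false_mul] at this

theorem isQuantumSL2_prod_triMat {ι : Type*} (upper : ι → Bool) (a : ι → Aˣ) (b : ι → A)
    (hq : q ≠ 0) (hba : ∀ i, b i * (a i : A) = q • ((a i : A) * b i))
    (hcomm : ∀ i j, i ≠ j →
      Commute ((a i : A)) ((a j : A)) ∧ Commute ((a i : A)) (b j) ∧
      Commute (b i) ((a j : A)) ∧ Commute (b i) (b j)) :
    ∀ {l : List ι}, l.Nodup → IsQuantumSL2 q (l.map fun i => triMat (upper i) (a i) (b i)).prod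
  | [], _ => isQuantumSL2_one q
  | i :: l, hl => by
    obtain ⟨hil, hl⟩ := List.nodup_cons.1 hl
    have hcent : ∀ j ∈ l, (a j : A) ∈ Subsemiring.centralizer {(a i : A), b i} ∧
        (↑(a j)⁻¹ : A) ∈ Subsemiring.centralizer {(a i : A), b i} ∧
        b j ∈ Subsemiring.centralizer {(a i : A), b i} := fun j hj => by
      obtain ⟨caa, cab, cba, cbb⟩ := hcomm j i (ne_of_mem_of_not_mem hj hil)
      simp only [Subsemiring.mem_centralizer_iff, Set.mem_insert_iff, Set.mem_singleton_iff,
        forall_eq_or_imp, forall_eq]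
      exact ⟨⟨caa.eq.symm, cab.eq.symm⟩, ⟨caa.units_inv_left.eq.symm, cab.units_inv_left.eq.symm⟩,
        cba.eq.symm, cbb.eq.symm⟩
    rw [List.map_cons, List.prod_cons]
    refine (isQuantumSL2_prod_triMat upper a b hq hba hcomm hl).triMat_mul hq (hba i)
      (fun r s => ?_) _
    have := Subsemiring.mem_centralizer_iff.1 (prod_triMat_apply_mem upper a b _ hcent r s)
    exact ⟨this _ (by simp), this _ (by simp)⟩

end QuantumSL2

def qTerm {K A : Type*} [DivisionRing K] [Ring A] [Module K A] {k : ℕ} (q : K) (a : Fin k → Aˣ)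
    (b : Fin k → A) (m : ℤ × (Fin k → ℤ) × (Fin k → ℕ)) : A :=
  q ^ m.1 • qMonomial a b m.2

section QMonomial
variable {A : Type*} [Ring A] {k : ℕ} (a : Fin k → Aˣ) (b : Fin k → A)

theorem qMonomial_zero : qMonomial a b 0 = 1 := by
  simp [qMonomial]

theorem qMonomial_single_fst (i : Fin k) (n : ℤ) :
    qMonomial a b (Pi.single i n, 0) = ↑(a i ^ n) := by
  rw [qMonomial, List.prod_ofFn_eq_single _ i fun j hj => by simp [hj]]
  simp

theorem qMonomial_single_snd (i : Fin k) : qMonomial a b (0, Pi.single i 1) = b i := by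
  rw [qMonomial, List.prod_ofFn_eq_single (fun j => b j ^ _) i fun j hj => by simp [hj]]
  simp

theorem qMonomial_eq_prod_ofFn
    (hab : ∀ i j, i ≠ j → Commute (a i : A) (b j)) (m : (Fin k → ℤ) × (Fin k → ℕ)) :
    qMonomial a b m = (List.ofFn fun i => ↑(a i ^ m.1 i) * b i ^ m.2 i).prod :=
  List.prod_ofFn_mul_prod_ofFn _ _ fun i j hij =>
    ((hab i j hij.ne').units_zpow_left _).pow_right _

variable {K : Type*} [Field K] [Algebra K A] {q : K}

theorem qMonomial_mul (hq : q ≠ 0) (hba : ∀ i, b i * (a i : A) = q • ((a i : A) * b i))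
    (hcomm : ∀ i j, i ≠ j →
      Commute (a i : A) (a j) ∧ Commute (a i : A) (b j) ∧
      Commute (b i) (a j) ∧ Commute (b i) (b j))
    (m m' : (Fin k → ℤ) × (Fin k → ℕ)) :
    qMonomial a b m * qMonomial a b m' =
      q ^ (∑ i, (m.2 i : ℤ) * m'.1 i) • qMonomial a b (m + m') := by
  have hab i j hij := (hcomm i j hij).2.1
  have hfactor (i j : Fin k) (hij : i ≠ j) (α α' : ℤ) (β β' : ℕ) :
      Commute (↑(a i ^ α) * b i ^ β) (↑(a j ^ α') * b j ^ β') := by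
    obtain ⟨caa, cab, cba, cbb⟩ := hcomm i j hij
    exact .mul_left (.mul_right ((caa.units_zpow_left _).units_zpow_right _)
        ((cab.units_zpow_left _).pow_right _))
      (.mul_right ((cba.pow_left _).units_zpow_right _) ((cbb.pow_left _).pow_right _))
  rw [qMonomial_eq_prod_ofFn a b hab, qMonomial_eq_prod_ofFn a b hab,
    qMonomial_eq_prod_ofFn a b hab,
    List.prod_ofFn_mul_prod_ofFn _ _ fun i j hij => hfactor i j hij.ne' _ _ _ _,
    ← List.prod_ofFn_zpow_smul hq]
  congr 2
  funext i
  rw [mul_assoc, ← mul_assoc (b i ^ _), pow_mul_units_zpow_eq_smul hq (hba i)]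
  simp [mul_assoc, zpow_add, pow_add]

theorem qTerm_mul (hq : q ≠ 0) (hba : ∀ i, b i * (a i : A) = q • ((a i : A) * b i))
    (hcomm : ∀ i j, i ≠ j →
      Commute (a i : A) (a j) ∧ Commute (a i : A) (b j) ∧
      Commute (b i) (a j) ∧ Commute (b i) (b j))
    (m m' : ℤ × (Fin k → ℤ) × (Fin k → ℕ)) :
    qTerm q a b m * qTerm q a b m' =
      qTerm q a b (m.1 + m'.1 + ∑ i, (m.2.2 i : ℤ) * m'.2.1 i, m.2 + m'.2) := by
  rw [qTerm, qTerm, qTerm, smul_mul_smul_comm, qMonomial_mul a b hq hba hcomm, smul_smul,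
    ← zpow_add₀ hq, ← zpow_add₀ hq]

theorem exists_multiset_of_mem_closure_range_qTerm (hq : q ≠ 0)
    (hba : ∀ i, b i * (a i : A) = q • ((a i : A) * b i))
    (hcomm : ∀ i j, i ≠ j →
      Commute ((a i : A)) ((a j : A)) ∧ Commute ((a i : A)) (b j) ∧
      Commute (b i) ((a j : A)) ∧ Commute (b i) (b j))
    {x : A} (hx : x ∈ Subsemiring.closure (Set.range (qTerm q a b))) :
    ∃ s : Multiset (ℤ × (Fin k → ℤ) × (Fin k → ℕ)), x = (s.map (qTerm q a b)).sum := by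
  have hmonoid : (Submonoid.closure (Set.range (qTerm q a b)) : Set A) ⊆ Set.range (qTerm q a b) :=
    fun y hy => by
      induction hy using Submonoid.closure_induction with
      | mem y hy => exact hy
      | one => exact ⟨0, by simp [qTerm, qMonomial_zero]⟩
      | mul y z _ _ hy hz =>
        obtain ⟨⟨m, rfl⟩, ⟨m', rfl⟩⟩ := And.intro hy hz
        exact ⟨_, (qTerm_mul a b hq hba hcomm m m').symm⟩
  rw [Subsemiring.mem_closure_iff] at hx
  induction hx using AddSubmonoid.closure_induction with
  | mem y hy =>
    obtain ⟨m, rfl⟩ := hmonoid hy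
    exact ⟨{m}, by simp⟩
  | zero => exact ⟨0, by simp⟩
  | add y z _ _ hy hz =>
    obtain ⟨⟨s, rfl⟩, ⟨t, rfl⟩⟩ := And.intro hy hz
    exact ⟨s + t, by simp⟩

theorem zpow_smul_mem_closure_range_qTerm (ξ : ℤ) {u : A}
    (hu : u ∈ Subsemiring.closure (Set.range (qTerm q a b))) :
    q ^ ξ • u ∈ Subsemiring.closure (Set.range (qTerm q a b)) := by
  simpa [qTerm, qMonomial_zero] using
    (Subsemiring.closure (Set.range (qTerm q a b))).mul_mem
      (Subsemiring.subset_closure ⟨(ξ, 0), rfl⟩) hu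

theorem generators_mem_closure_range_qTerm (i : Fin k) :
    (a i : A) ∈ Subsemiring.closure (Set.range (qTerm q a b)) ∧
      (↑(a i)⁻¹ : A) ∈ Subsemiring.closure (Set.range (qTerm q a b)) ∧
      b i ∈ Subsemiring.closure (Set.range (qTerm q a b)) := by
  have hterm m : qTerm q a b m ∈ Subsemiring.closure (Set.range (qTerm q a b)) :=
    Subsemiring.subset_closure ⟨m, rfl⟩
  refine ⟨?_, ?_, ?_⟩
  · simpa [qTerm, qMonomial_single_fst] using hterm (0, Pi.single i 1, 0)
  · simpa [qTerm, qMonomial_single_fst] using hterm (0, Pi.single i (-1), 0)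
  · simpa [qTerm, qMonomial_single_snd] using hterm (0, 0, Pi.single i 1)

end QMonomial

/-- Positivity property: for any nonzero `q ∈ ℂ`, `T_n(Trace A₁⋯A_k)` can be written as
a sum of monomials `q^ξ ∏ᵢ aᵢ^{αᵢ} bᵢ^{βᵢ}` (ξ, αᵢ ∈ ℤ, βᵢ ∈ ℕ), each with
coefficient `+1`. -/
theorem chebT_trace_positive_sum {A : Type*} [Ring A] [Algebra ℂ A]
    (q : ℂ) (hq : q ≠ 0) {k : ℕ}
    (a : Fin k → Aˣ) (b : Fin k → A) (upper : Fin k → Bool)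
    (hba : ∀ i, b i * (a i : A) = q • ((a i : A) * b i))
    (hcomm : ∀ i j, i ≠ j →
      Commute ((a i : A)) ((a j : A)) ∧ Commute ((a i : A)) (b j) ∧
      Commute (b i) ((a j : A)) ∧ Commute (b i) (b j))
    (n : ℕ) :
    ∃ s : Multiset (ℤ × (Fin k → ℤ) × (Fin k → ℕ)),
      chebT n (Matrix.trace (List.ofFn fun i => triMat (upper i) (a i) (b i)).prod)
        = (s.map fun m => q ^ m.1 • qMonomial a b m.2).sum := by
  set P := Subsemiring.closure (Set.range (qTerm q a b))
  rw [List.ofFn_eq_map, Matrix.trace_fin_two]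
  set M := (List.map (fun i => triMat (upper i) (a i) (b i)) (List.finRange k)).prod
  have hM : IsQuantumSL2 q M :=
    isQuantumSL2_prod_triMat upper a b hq hba hcomm (List.nodup_finRange k)
  have hentry r s : M r s ∈ P :=
    prod_triMat_apply_mem upper a b P (fun i _ => generators_mem_closure_range_qTerm a b i) r s
  have hyz : M 0 1 * M 1 0 ∈ P := P.mul_mem (hentry 0 1) (hentry 1 0)
  refine exists_multiset_of_mem_closure_range_qTerm a b hq hba hcomm
    (chebT_add_mem P (hentry 0 0) (hentry 1 1) ?_ ?_ n)
  · rw [hM.xw, add_sub_cancel_left, ← zpow_neg_one]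
    exact zpow_smul_mem_closure_range_qTerm a b _ hyz
  · rw [hM.wx, add_sub_cancel_left, ← zpow_one q]
    exact zpow_smul_mem_closure_range_qTerm a b _ hyz
end
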